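/- If g : [a,b] → ℝ has finite total variation, g(a) = 0, increments of g approximate increments of f with accuracy c (|{g(s) − g(u)} − {f(s) − f(u)}| ≤ c for all a ≤ u < s ≤ b), and TV(g,[a,s]) ≤ TV^c(f,[a,s]) for every s ∈ [a,b], then g(s) = UTV^c(f,[a,s]) − DTV^c(f,[a,s]) for all s ∈ [a,b]. -/

import Mathlib

open Set Filter

/-- A finite partition `t 0 < t 1 < ... < t n` of points in `[a, b]`. -/
def IsPart (a b : ℝ) (n : ℕ) (t : ℕ → ℝ) : Prop :=
  a ≤ t 0 ∧ t n ≤ b ∧ ∀ i < n, t i < t (i + 1)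

/-- Total variation of `f` on `[a, b]`. -/
noncomputable def TVar {E : Type*} [PseudoMetricSpace E] (f : ℝ → E) (a b : ℝ) : ENNReal :=
  ⨆ (n : ℕ) (t : ℕ → ℝ) (_ : IsPart a b n t),
    ∑ i ∈ Finset.range n, ENNReal.ofReal (dist (f (t (i + 1))) (f (t i)))

/-- Truncated variation of `f` at level `c` on `[a, b]`. -/
noncomputable def TVc {E : Type*} [PseudoMetricSpace E] (f : ℝ → E) (c a b : ℝ) : ENNReal :=
  ⨆ (n : ℕ) (t : ℕ → ℝ) (_ : IsPart a b n t),
    ∑ i ∈ Finset.range n, ENNReal.ofReal (dist (f (t (i + 1))) (f (t i)) - c)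

/-- Upward truncated variation. -/
noncomputable def UTVc (f : ℝ → ℝ) (c a b : ℝ) : ENNReal :=
  ⨆ (n : ℕ) (t : ℕ → ℝ) (_ : IsPart a b n t),
    ∑ i ∈ Finset.range n, ENNReal.ofReal (f (t (i + 1)) - f (t i) - c)

/-- Downward truncated variation. -/
noncomputable def DTVc (f : ℝ → ℝ) (c a b : ℝ) : ENNReal :=
  ⨆ (n : ℕ) (t : ℕ → ℝ) (_ : IsPart a b n t),
    ∑ i ∈ Finset.range n, ENNReal.ofReal (f (t i) - f (t (i + 1)) - c)

/-- `f` is càdlàg on `[a, b]`: right-continuous on `[a, b)`, with left limits on `(a, b]`. -/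
def Cadlag {E : Type*} [TopologicalSpace E] (f : ℝ → E) (a b : ℝ) : Prop :=
  (∀ t ∈ Set.Ico a b, Tendsto f (nhdsWithin t (Set.Ioi t)) (nhds (f t))) ∧
  (∀ t ∈ Set.Ioc a b, ∃ l, Tendsto f (nhdsWithin t (Set.Iio t)) (nhds l))

/-!
Write `U` and `D` for the upward and downward variations of `g` on `[a, s]`, i.e. `UTVc g 0`
and `DTVc g 0`. As the increments of `g` are `c`-close to those of `f`, `UTV^c(f) ≤ U` and
`DTV^c(f) ≤ D`. The Jordan inequality `U + D ≤ TV(g)`, the hypothesis `TV(g) ≤ TV^c(f)` and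
`TV^c(f) ≤ UTV^c(f) + DTV^c(f)` close the chain `U + D ≤ UTV^c(f) + DTV^c(f) ≤ U + D`, so by
finiteness `UTV^c(f) = U` and `DTV^c(f) = D`. Finally `U - D = g s - g a = g s`.
-/

open scoped ENNReal

namespace IsPart

variable {a s : ℝ} {n : ℕ} {t : ℕ → ℝ}

theorem apply_le_apply (h : IsPart a s n t) {i j : ℕ} (hij : i ≤ j) (hjn : j ≤ n) :
    t i ≤ t j := by
  induction j, hij using Nat.le_induction with
  | base => exact le_rfl
  | succ j _ ih => exact (ih (by omega)).trans (h.2.2 j (by omega)).le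

theorem mem_Icc (h : IsPart a s n t) {i : ℕ} (hi : i ≤ n) : t i ∈ Icc a s :=
  ⟨h.1.trans (h.apply_le_apply i.zero_le hi), (h.apply_le_apply hi le_rfl).trans h.2.1⟩

end IsPart

noncomputable def partSum (φ : ℝ → ℝ → ℝ) (n : ℕ) (t : ℕ → ℝ) : ℝ≥0∞ :=
  ∑ i ∈ Finset.range n, ENNReal.ofReal (φ (t i) (t (i + 1)))

noncomputable def partSup (a s : ℝ) (φ : ℝ → ℝ → ℝ) : ℝ≥0∞ :=
  ⨆ (n : ℕ) (t : ℕ → ℝ) (_ : IsPart a s n t), partSum φ n t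

section partSup

variable {a s : ℝ} {n : ℕ} {t : ℕ → ℝ} {φ : ℝ → ℝ → ℝ}

theorem TVar_eq_partSup {E : Type*} [PseudoMetricSpace E] (f : ℝ → E) (a s : ℝ) :
    TVar f a s = partSup a s fun x y => dist (f y) (f x) := rfl

theorem TVc_eq_partSup {E : Type*} [PseudoMetricSpace E] (f : ℝ → E) (c a s : ℝ) :
    TVc f c a s = partSup a s fun x y => dist (f y) (f x) - c := rfl

theorem UTVc_eq_partSup (f : ℝ → ℝ) (c a s : ℝ) :
    UTVc f c a s = partSup a s fun x y => f y - f x - c := rfl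

theorem DTVc_eq_partSup (f : ℝ → ℝ) (c a s : ℝ) :
    DTVc f c a s = partSup a s fun x y => f x - f y - c := rfl

theorem partSum_le_partSup (h : IsPart a s n t) : partSum φ n t ≤ partSup a s φ :=
  le_iSup₂_of_le (f := fun n t => ⨆ _ : IsPart a s n t, partSum φ n t) n t (le_iSup_of_le h le_rfl)

theorem partSup_le {C : ℝ≥0∞} (h : ∀ n t, IsPart a s n t → partSum φ n t ≤ C) :
    partSup a s φ ≤ C :=
  iSup₂_le fun n t => iSup_le (h n t)

theorem partSup_mono {ψ : ℝ → ℝ → ℝ} (h : ∀ x ∈ Icc a s, ∀ y ∈ Icc a s, x < y → φ x y ≤ ψ x y) :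
    partSup a s φ ≤ partSup a s ψ :=
  partSup_le fun n t ht => le_trans
    (Finset.sum_le_sum fun i hi => ENNReal.ofReal_le_ofReal <| by
      have hi : i < n := Finset.mem_range.1 hi
      exact h _ (ht.mem_Icc hi.le) _ (ht.mem_Icc hi) (ht.2.2 i hi))
    (partSum_le_partSup ht)

theorem partSup_mono_right {b : ℝ} (hsb : s ≤ b) : partSup a s φ ≤ partSup a b φ :=
  partSup_le fun _ _ ht => partSum_le_partSup ⟨ht.1, ht.2.1.trans hsb, ht.2.2⟩

theorem TVar_mono_right {E : Type*} [PseudoMetricSpace E] (f : ℝ → E) {b : ℝ} (hsb : s ≤ b) :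
    TVar f a s ≤ TVar f a b := by
  rw [TVar_eq_partSup, TVar_eq_partSup]
  exact partSup_mono_right hsb

theorem IsPart.exists_start_eq (h : IsPart a s n t) :
    ∃ m u, IsPart a s m u ∧ u 0 = a ∧ u m = t n ∧ ∀ φ, partSum φ n t ≤ partSum φ m u := by
  rcases h.1.eq_or_lt with h0 | h0
  · exact ⟨n, t, h, h0.symm, rfl, fun _ => le_rfl⟩
  refine ⟨n + 1, fun i => Nat.casesOn (motive := fun _ => ℝ) i a t,
    ⟨le_rfl, h.2.1, fun i hi => ?_⟩, rfl, rfl, fun φ => ?_⟩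
  · cases i with
    | zero => exact h0
    | succ i => exact h.2.2 i (by omega)
  · rw [partSum, partSum, Finset.sum_range_succ']
    exact le_self_add

theorem IsPart.exists_end_eq (h : IsPart a s n t) :
    ∃ m u, IsPart a s m u ∧ u 0 = t 0 ∧ u m = s ∧ ∀ φ, partSum φ n t ≤ partSum φ m u := by
  rcases h.2.1.eq_or_lt with hn | hn
  · exact ⟨n, t, h, rfl, hn, fun _ => le_rfl⟩
  refine ⟨n + 1, fun i => if i ≤ n then t i else s,
    ⟨by simpa using h.1, by simp, fun i hi => ?_⟩, by simp, by simp, fun φ => ?_⟩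
  · rcases (Nat.lt_succ_iff.1 hi).lt_or_eq with hi | rfl
    · simpa [hi.le, Nat.succ_le_of_lt hi] using h.2.2 i hi
    · simpa using hn
  · rw [partSum, partSum, Finset.sum_range_succ]
    refine le_add_right (Finset.sum_le_sum fun i hi => le_of_eq ?_)
    have hi : i < n := Finset.mem_range.1 hi
    simp [hi.le, Nat.succ_le_of_lt hi]

theorem IsPart.exists_endpoints (h : IsPart a s n t) :
    ∃ m u, IsPart a s m u ∧ u 0 = a ∧ u m = s ∧ ∀ φ, partSum φ n t ≤ partSum φ m u := by
  obtain ⟨m₁, u₁, h₁, hu₁, -, hle₁⟩ := h.exists_start_eq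
  obtain ⟨m, u, hu, hu0, hum, hle⟩ := h₁.exists_end_eq
  exact ⟨m, u, hu, hu0.trans hu₁, hum, fun φ => (hle₁ φ).trans (hle φ)⟩

theorem partSup_add_le {x C : ℝ≥0∞} (has : a ≤ s)
    (h : ∀ n t, IsPart a s n t → t 0 = a → t n = s → partSum φ n t + x ≤ C) :
    partSup a s φ + x ≤ C := by
  have hpart : ∀ n t, IsPart a s n t → partSum φ n t + x ≤ C := fun n t ht => by
    obtain ⟨m, u, hu, hu0, hum, hle⟩ := ht.exists_endpoints
    exact (add_le_add (hle φ) le_rfl).trans (h m u hu hu0 hum)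
  simp only [partSup, ENNReal.iSup_add]
  refine iSup₂_le fun n t => ?_
  by_cases ht : IsPart a s n t
  · simpa [iSup_pos ht] using hpart n t ht
  · simpa [iSup_neg ht] using le_add_self.trans (hpart 0 (fun _ => a) ⟨le_rfl, has, by simp⟩)

end partSup

theorem partSum_eq_ofReal_sum_max (φ : ℝ → ℝ → ℝ) (n : ℕ) (t : ℕ → ℝ) :
    partSum φ n t = ENNReal.ofReal (∑ i ∈ Finset.range n, max (φ (t i) (t (i + 1))) 0) := by
  rw [ENNReal.ofReal_sum_of_nonneg fun _ _ => le_max_right _ _]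
  simp [partSum]

theorem ofReal_sub_add_ofReal_neg_sub {c : ℝ} (hc : 0 ≤ c) (d : ℝ) :
    ENNReal.ofReal (d - c) + ENNReal.ofReal (-d - c) = ENNReal.ofReal (|d| - c) := by
  rcases le_total 0 d with hd | hd
  · rw [abs_of_nonneg hd, ENNReal.ofReal_of_nonpos (by linarith : -d - c ≤ 0), add_zero]
  · rw [abs_of_nonpos hd, ENNReal.ofReal_of_nonpos (by linarith : d - c ≤ 0), zero_add]

theorem partSum_up_add_partSum_down {c : ℝ} (hc : 0 ≤ c) (f : ℝ → ℝ) (n : ℕ) (t : ℕ → ℝ) :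
    partSum (fun x y => f y - f x - c) n t + partSum (fun x y => f x - f y - c) n t =
      partSum (fun x y => dist (f y) (f x) - c) n t := by
  simp only [partSum, ← Finset.sum_add_distrib]
  refine Finset.sum_congr rfl fun i _ => ?_
  rw [Real.dist_eq, ← ofReal_sub_add_ofReal_neg_sub hc, neg_sub]

theorem TVc_le_UTVc_add_DTVc {c : ℝ} (hc : 0 ≤ c) (f : ℝ → ℝ) (a s : ℝ) :
    TVc f c a s ≤ UTVc f c a s + DTVc f c a s := by
  rw [TVc_eq_partSup, UTVc_eq_partSup, DTVc_eq_partSup]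
  refine partSup_le fun n t ht => ?_
  rw [← partSum_up_add_partSum_down hc]
  exact add_le_add (partSum_le_partSup ht) (partSum_le_partSup ht)

theorem partSum_sub_add_ofReal (g : ℝ → ℝ) (n : ℕ) (t : ℕ → ℝ) :
    partSum (fun x y => g y - g x) n t + ENNReal.ofReal (g (t 0) - g (t n)) =
      partSum (fun x y => g x - g y) n t + ENNReal.ofReal (g (t n) - g (t 0)) := by
  have hmax : ∀ x : ℝ, ENNReal.ofReal x = ENNReal.ofReal (max x 0) := by simp
  have hpos : ∀ d : ℕ → ℝ, 0 ≤ ∑ i ∈ Finset.range n, max (d i) 0 :=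
    fun _ => Finset.sum_nonneg fun _ _ => le_max_right _ _
  rw [partSum_eq_ofReal_sum_max, partSum_eq_ofReal_sum_max, hmax (g (t 0) - g (t n)),
    hmax (g (t n) - g (t 0)), ← ENNReal.ofReal_add (hpos _) (le_max_right _ _),
    ← ENNReal.ofReal_add (hpos _) (le_max_right _ _)]
  congr 1
  have htel : ∑ i ∈ Finset.range n, max (g (t (i + 1)) - g (t i)) 0 -
      ∑ i ∈ Finset.range n, max (g (t i) - g (t (i + 1))) 0 = g (t n) - g (t 0) := by
    rw [← Finset.sum_sub_distrib, ← Finset.sum_range_sub (fun i => g (t i))]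
    refine Finset.sum_congr rfl fun i _ => ?_
    rw [← neg_sub (g (t (i + 1))) (g (t i)), max_zero_sub_max_neg_zero_eq_self]
  have hD := max_zero_sub_max_neg_zero_eq_self (g (t n) - g (t 0))
  rw [neg_sub] at hD
  linarith

/-- Both partitions telescope to the same total increment, so the one with the larger downward
part also has the larger upward part. -/
theorem partSum_up_add_partSum_down_le (g : ℝ → ℝ) {n m : ℕ} {t u : ℕ → ℝ}
    (h0 : t 0 = u 0) (hn : t n = u m) :
    partSum (fun x y => g y - g x) n t + partSum (fun x y => g x - g y) m u ≤
      max (partSum (fun x y => dist (g y) (g x)) n t)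
        (partSum (fun x y => dist (g y) (g x)) m u) := by
  have hV : ∀ k v, partSum (fun x y => g y - g x) k v + partSum (fun x y => g x - g y) k v =
      partSum (fun x y => dist (g y) (g x)) k v := fun k v => by
    simpa only [sub_zero] using partSum_up_add_partSum_down le_rfl g k v
  rcases le_total (partSum (fun x y => g x - g y) m u) (partSum (fun x y => g x - g y) n t)
    with hN | hN
  · exact le_max_of_le_left ((add_le_add le_rfl hN).trans (hV n t).le)
  · refine le_max_of_le_right ((add_le_add ?_ le_rfl).trans (hV m u).le)
    have ht := partSum_sub_add_ofReal g n t
    rw [h0, hn] at ht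
    refine (ENNReal.add_le_add_iff_right (ENNReal.ofReal_ne_top (r := g (u 0) - g (u m)))).1 ?_
    rw [ht, partSum_sub_add_ofReal g m u]
    exact add_le_add hN le_rfl

section Jordan

variable (g : ℝ → ℝ) {a s : ℝ}

theorem UTVc_zero_add_DTVc_zero_le_TVar (has : a ≤ s) :
    UTVc g 0 a s + DTVc g 0 a s ≤ TVar g a s := by
  simp only [UTVc_eq_partSup, DTVc_eq_partSup, TVar_eq_partSup, sub_zero]
  refine partSup_add_le has fun n t ht ht0 htn => ?_
  rw [add_comm]
  refine partSup_add_le has fun m u hu hu0 hum => ?_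
  rw [add_comm]
  exact (partSum_up_add_partSum_down_le g (ht0.trans hu0.symm) (htn.trans hum.symm)).trans
    (max_le (partSum_le_partSup ht) (partSum_le_partSup hu))

theorem UTVc_zero_add_ofReal_eq (has : a ≤ s) :
    UTVc g 0 a s + ENNReal.ofReal (g a - g s) = DTVc g 0 a s + ENNReal.ofReal (g s - g a) := by
  simp only [UTVc_eq_partSup, DTVc_eq_partSup, sub_zero]
  refine le_antisymm (partSup_add_le has fun n t ht ht0 htn => ?_)
    (partSup_add_le has fun n t ht ht0 htn => ?_)
  all_goals
    have heq := partSum_sub_add_ofReal g n t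
    rw [ht0, htn] at heq
  · rw [heq]
    exact add_le_add (partSum_le_partSup ht) le_rfl
  · rw [← heq]
    exact add_le_add (partSum_le_partSup ht) le_rfl

theorem toReal_UTVc_zero_sub_toReal_DTVc_zero (has : a ≤ s)
    (hfin : UTVc g 0 a s + DTVc g 0 a s ≠ ⊤) :
    (UTVc g 0 a s).toReal - (DTVc g 0 a s).toReal = g s - g a := by
  obtain ⟨hU, hD⟩ := ENNReal.add_ne_top.1 hfin
  have h := congrArg ENNReal.toReal (UTVc_zero_add_ofReal_eq g has)
  rw [ENNReal.toReal_add hU ENNReal.ofReal_ne_top, ENNReal.toReal_add hD ENNReal.ofReal_ne_top,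
    ENNReal.toReal_ofReal', ENNReal.toReal_ofReal'] at h
  have hmax := max_zero_sub_max_neg_zero_eq_self (g s - g a)
  rw [neg_sub] at hmax
  linarith

end Jordan

section Approximation

variable {f g : ℝ → ℝ} {c a s : ℝ}

theorem UTVc_le_UTVc_zero_of_abs_le
    (h : ∀ x ∈ Icc a s, ∀ y ∈ Icc a s, x < y → |(g y - g x) - (f y - f x)| ≤ c) :
    UTVc f c a s ≤ UTVc g 0 a s := by
  simp only [UTVc_eq_partSup, sub_zero]
  exact partSup_mono fun x hx y hy hxy => by linarith [(abs_le.1 (h x hx y hy hxy)).1]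

theorem DTVc_le_DTVc_zero_of_abs_le
    (h : ∀ x ∈ Icc a s, ∀ y ∈ Icc a s, x < y → |(g y - g x) - (f y - f x)| ≤ c) :
    DTVc f c a s ≤ DTVc g 0 a s := by
  simp only [DTVc_eq_partSup, sub_zero]
  exact partSup_mono fun x hx y hy hxy => by linarith [(abs_le.1 (h x hx y hy hxy)).2]

end Approximation

theorem ENNReal.eq_and_eq_of_add_le_add {x y x' y' : ℝ≥0∞} (hx : x' ≤ x) (hy : y' ≤ y)
    (h : x + y ≤ x' + y') (hfin : x + y ≠ ⊤) : x' = x ∧ y' = y := by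
  obtain ⟨hx_top, hy_top⟩ := ENNReal.add_ne_top.1 hfin
  refine ⟨le_antisymm hx ?_, le_antisymm hy ?_⟩
  · exact (ENNReal.add_le_add_iff_right hy_top).1 (h.trans (add_le_add le_rfl hy))
  · exact (ENNReal.add_le_add_iff_left hx_top).1 (h.trans (add_le_add hx le_rfl))

theorem f0c_unique_general (a b : ℝ) (f : ℝ → ℝ) (c : ℝ) (hc : 0 < c)
    (g : ℝ → ℝ) (hga : g a = 0)
    (hgTV : TVar g a b < ⊤)
    (hincr : ∀ u ∈ Set.Icc a b, ∀ s ∈ Set.Icc a b, u < s →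
      |(g s - g u) - (f s - f u)| ≤ c)
    (hopt : ∀ s ∈ Set.Icc a b, TVar g a s ≤ TVc f c a s) :
    ∀ s ∈ Set.Icc a b, g s = (UTVc f c a s).toReal - (DTVc f c a s).toReal := by
  rintro s ⟨has, hsb⟩
  have hclose : ∀ x ∈ Icc a s, ∀ y ∈ Icc a s, x < y → |(g y - g x) - (f y - f x)| ≤ c :=
    fun x hx y hy => hincr x (Icc_subset_Icc_right hsb hx) y (Icc_subset_Icc_right hsb hy)
  have hJordan := UTVc_zero_add_DTVc_zero_le_TVar g has
  have hfin : UTVc g 0 a s + DTVc g 0 a s ≠ ⊤ :=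
    (hJordan.trans_lt ((TVar_mono_right g hsb).trans_lt hgTV)).ne
  obtain ⟨hU, hD⟩ := ENNReal.eq_and_eq_of_add_le_add (UTVc_le_UTVc_zero_of_abs_le hclose)
    (DTVc_le_DTVc_zero_of_abs_le hclose)
    (calc UTVc g 0 a s + DTVc g 0 a s ≤ TVar g a s := hJordan
      _ ≤ TVc f c a s := hopt s ⟨has, hsb⟩
      _ ≤ UTVc f c a s + DTVc f c a s := TVc_le_UTVc_add_DTVc hc.le f a s) hfin
  rw [hU, hD, toReal_UTVc_zero_sub_toReal_DTVc_zero g has hfin, hga, sub_zero]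

/-- Uniqueness of `f^{0,c}`: if `g(a) = 0`, the increments of `g`
approximate those of `f` with accuracy `c`, `g` has finite total variation, and
`TV(g,[a,s]) ≤ TV^c(f,[a,s])` for every `s`, then `g = UTV^c − DTV^c`. -/
theorem f0c_unique (a b : ℝ) (hab : a < b) (f : ℝ → ℝ)
    (hf : Cadlag f a b) (c : ℝ) (hc : 0 < c)
    (g : ℝ → ℝ) (hga : g a = 0)
    (hgTV : TVar g a b < ⊤)
    (hincr : ∀ u ∈ Set.Icc a b, ∀ s ∈ Set.Icc a b, u < s →
      |(g s - g u) - (f s - f u)| ≤ c)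
    (hopt : ∀ s ∈ Set.Icc a b, TVar g a s ≤ TVc f c a s) :
    ∀ s ∈ Set.Icc a b, g s = (UTVc f c a s).toReal - (DTVc f c a s).toReal :=
  f0c_unique_general a b f c hc g hga hgTV hincr hopt
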